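/- In the Maker-Breaker scoring positional game the same nonzugzwang property holds: for every finite hypergraph H and disjoint sets V_L, V_R of claimed vertices, Ls(H, V_L, V_R) ≥ Rs(H, V_L, V_R). -/

import Mathlib

/-- Minimax value of a scoring positional game: players alternately claim
unclaimed vertices (`turn = true` means Left/Maker to move); when all vertices
are claimed the value is given by `score VL VR`. Left maximizes, Right minimizes. -/
noncomputable def gameValue {V : Type} [Fintype V] [DecidableEq V]
    (score : Finset V → Finset V → ℤ) :
    Bool → Finset V → Finset V → ℤ := fun turn VL VR =>
  if h : (VL ∪ VR)ᶜ = (∅ : Finset V) then score VL VR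
  else
    have hne : ((VL ∪ VR)ᶜ).attach.Nonempty :=
      Finset.attach_nonempty_iff.mpr (Finset.nonempty_iff_ne_empty.mpr h)
    if turn then
      ((VL ∪ VR)ᶜ).attach.sup' hne (fun v => gameValue score false (insert v.1 VL) VR)
    else
      ((VL ∪ VR)ᶜ).attach.inf' hne (fun v => gameValue score true VL (insert v.1 VR))
termination_by turn VL VR => ((VL ∪ VR)ᶜ).card
decreasing_by
  · rw [Finset.insert_union, Finset.compl_insert]
    exact Finset.card_erase_lt_of_mem v.2
  · rw [Finset.union_insert, Finset.compl_insert]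
    exact Finset.card_erase_lt_of_mem v.2

/-- Maker-Breaker Incidence final score: number of edges of `G` both of whose
endpoints belong to Left's (Maker's) set. -/
noncomputable def mbScore {V : Type} [Fintype V] [DecidableEq V]
    (G : SimpleGraph V) (VL : Finset V) (_ : Finset V) : ℤ :=
  ({e ∈ G.edgeSet | ∀ w ∈ e, w ∈ VL} : Set (Sym2 V)).ncard

/-- Maker-Maker Incidence final score: Left's edges minus Right's edges. -/
noncomputable def mmScore {V : Type} [Fintype V] [DecidableEq V]
    (G : SimpleGraph V) (VL VR : Finset V) : ℤ :=
  (({e ∈ G.edgeSet | ∀ w ∈ e, w ∈ VL} : Set (Sym2 V)).ncard : ℤ)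
    - (({e ∈ G.edgeSet | ∀ w ∈ e, w ∈ VR} : Set (Sym2 V)).ncard : ℤ)

noncomputable def LsMB {V : Type} [Fintype V] [DecidableEq V] (G : SimpleGraph V) : ℤ :=
  gameValue (mbScore G) true ∅ ∅

noncomputable def RsMB {V : Type} [Fintype V] [DecidableEq V] (G : SimpleGraph V) : ℤ :=
  gameValue (mbScore G) false ∅ ∅

noncomputable def LsMM {V : Type} [Fintype V] [DecidableEq V] (G : SimpleGraph V) : ℤ :=
  gameValue (mmScore G) true ∅ ∅

noncomputable def RsMM {V : Type} [Fintype V] [DecidableEq V] (G : SimpleGraph V) : ℤ :=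
  gameValue (mmScore G) false ∅ ∅

/-- Maker-Breaker final score on a hypergraph with edge set `E`. -/
def mbScoreH {V : Type} [Fintype V] [DecidableEq V]
    (E : Finset (Finset V)) (VL : Finset V) (_ : Finset V) : ℤ :=
  ((E.filter (fun e => e ⊆ VL)).card : ℤ)

/-- Maker-Maker final score on a hypergraph with edge set `E`. -/
def mmScoreH {V : Type} [Fintype V] [DecidableEq V]
    (E : Finset (Finset V)) (VL VR : Finset V) : ℤ :=
  ((E.filter (fun e => e ⊆ VL)).card : ℤ) - ((E.filter (fun e => e ⊆ VR)).card : ℤ)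

/-!
Giving Maker an extra free vertex never lowers the value of a position, whoever is to move:
this is proved by induction on the number of free vertices. If Maker's first move is that very
vertex, nonzugzwang one level down closes the case; any other first move `w` is handled by
monotonicity after `w`. Breaker's answers in the enlarged position are all available in the
original one, and at the end of play only the final score is compared. Nonzugzwang follows at
once: Breaker to move is worth at most the position with one more vertex for Maker, which is
one of Maker's options.
-/

section GameValue

variable {V : Type} [Fintype V] [DecidableEq V] {score : Finset V → Finset V → ℤ}
  {VL VR : Finset V} {v : V}

lemma gameValue_of_compl_eq_empty (turn : Bool) (h : (VL ∪ VR)ᶜ = ∅) :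
    gameValue score turn VL VR = score VL VR := by
  rw [gameValue, dif_pos h]

lemma gameValue_true_of_compl_ne_empty (h : (VL ∪ VR)ᶜ ≠ ∅) :
    gameValue score true VL VR =
      ((VL ∪ VR)ᶜ).attach.sup'
        (Finset.attach_nonempty_iff.mpr (Finset.nonempty_iff_ne_empty.mpr h))
        fun w => gameValue score false (insert w.1 VL) VR := by
  rw [gameValue, dif_neg h]
  rfl

lemma gameValue_false_of_compl_ne_empty (h : (VL ∪ VR)ᶜ ≠ ∅) :
    gameValue score false VL VR =
      ((VL ∪ VR)ᶜ).attach.inf'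
        (Finset.attach_nonempty_iff.mpr (Finset.nonempty_iff_ne_empty.mpr h))
        fun w => gameValue score true VL (insert w.1 VR) := by
  rw [gameValue, dif_neg h]
  rfl

lemma le_gameValue_true (hv : v ∈ (VL ∪ VR)ᶜ) :
    gameValue score false (insert v VL) VR ≤ gameValue score true VL VR := by
  rw [gameValue_true_of_compl_ne_empty (Finset.ne_empty_of_mem hv)]
  exact Finset.le_sup'
    (fun w : {x // x ∈ (VL ∪ VR)ᶜ} => gameValue score false (insert w.1 VL) VR)
    (Finset.mem_attach _ ⟨v, hv⟩)

lemma gameValue_false_le (hv : v ∈ (VL ∪ VR)ᶜ) :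
    gameValue score false VL VR ≤ gameValue score true VL (insert v VR) := by
  rw [gameValue_false_of_compl_ne_empty (Finset.ne_empty_of_mem hv)]
  exact Finset.inf'_le
    (fun w : {x // x ∈ (VL ∪ VR)ᶜ} => gameValue score true VL (insert w.1 VR))
    (Finset.mem_attach _ ⟨v, hv⟩)

lemma gameValue_true_le {a : ℤ} (h : (VL ∪ VR)ᶜ ≠ ∅)
    (H : ∀ w ∈ (VL ∪ VR)ᶜ, gameValue score false (insert w VL) VR ≤ a) :
    gameValue score true VL VR ≤ a := by
  rw [gameValue_true_of_compl_ne_empty h]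
  exact Finset.sup'_le _ _ fun w _ => H w.1 w.2

lemma le_gameValue_false {a : ℤ} (h : (VL ∪ VR)ᶜ ≠ ∅)
    (H : ∀ w ∈ (VL ∪ VR)ᶜ, a ≤ gameValue score true VL (insert w VR)) :
    a ≤ gameValue score false VL VR := by
  rw [gameValue_false_of_compl_ne_empty h]
  exact Finset.le_inf' _ _ fun w _ => H w.1 w.2

lemma card_compl_insert_union_lt (hv : v ∈ (VL ∪ VR)ᶜ) :
    ((insert v VL ∪ VR)ᶜ).card < ((VL ∪ VR)ᶜ).card := by
  rw [Finset.insert_union, Finset.compl_insert]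
  exact Finset.card_erase_lt_of_mem hv

lemma card_compl_union_insert_lt (hv : v ∈ (VL ∪ VR)ᶜ) :
    ((VL ∪ insert v VR)ᶜ).card < ((VL ∪ VR)ᶜ).card := by
  rw [Finset.union_insert, Finset.compl_insert]
  exact Finset.card_erase_lt_of_mem hv

lemma gameValue_false_le_true_of_forall_le_insert
    (hmono : ∀ (b : Bool), ∀ v ∈ (VL ∪ VR)ᶜ,
      gameValue score b VL VR ≤ gameValue score b (insert v VL) VR) :
    gameValue score false VL VR ≤ gameValue score true VL VR := by
  by_cases hterm : (VL ∪ VR)ᶜ = ∅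
  · rw [gameValue_of_compl_eq_empty _ hterm, gameValue_of_compl_eq_empty _ hterm]
  · obtain ⟨v, hv⟩ := Finset.nonempty_iff_ne_empty.mpr hterm
    exact (hmono false v hv).trans (le_gameValue_true hv)

theorem gameValue_le_gameValue_insert_left
    (hscore : ∀ VL VR v, score VL (insert v VR) ≤ score (insert v VL) VR) :
    ∀ (b : Bool) {VL VR : Finset V} {v : V}, v ∈ (VL ∪ VR)ᶜ →
      gameValue score b VL VR ≤ gameValue score b (insert v VL) VR
  | true, VL, VR, v, hv => by
    refine gameValue_true_le (Finset.ne_empty_of_mem hv) fun w hw => ?_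
    by_cases hwv : w = v
    · subst hwv
      exact gameValue_false_le_true_of_forall_le_insert fun b u hu =>
        gameValue_le_gameValue_insert_left hscore b hu
    · have hv' : v ∈ (insert w VL ∪ VR)ᶜ := by simp_all [Ne.symm hwv]
      have hw' : w ∈ (insert v VL ∪ VR)ᶜ := by simp_all
      calc gameValue score false (insert w VL) VR
          ≤ gameValue score false (insert v (insert w VL)) VR :=
            gameValue_le_gameValue_insert_left hscore false hv'
        _ = gameValue score false (insert w (insert v VL)) VR := by rw [Finset.insert_comm]
        _ ≤ gameValue score true (insert v VL) VR := le_gameValue_true hw'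
  | false, VL, VR, v, hv => by
    by_cases hterm : (insert v VL ∪ VR)ᶜ = ∅
    · have hterm' : (VL ∪ insert v VR)ᶜ = ∅ := by
        rwa [Finset.union_insert, ← Finset.insert_union]
      calc gameValue score false VL VR
          ≤ gameValue score true VL (insert v VR) := gameValue_false_le hv
        _ = score VL (insert v VR) := gameValue_of_compl_eq_empty _ hterm'
        _ ≤ score (insert v VL) VR := hscore VL VR v
        _ = gameValue score false (insert v VL) VR := (gameValue_of_compl_eq_empty _ hterm).symm
    · refine le_gameValue_false hterm fun w hw => ?_
      have hwv : w ≠ v := by rintro rfl; simp at hw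
      have hw' : w ∈ (VL ∪ VR)ᶜ := by simp_all
      have hv' : v ∈ (VL ∪ insert w VR)ᶜ := by simp_all [Ne.symm hwv]
      calc gameValue score false VL VR
          ≤ gameValue score true VL (insert w VR) := gameValue_false_le hw'
        _ ≤ gameValue score true (insert v VL) (insert w VR) :=
            gameValue_le_gameValue_insert_left hscore true hv'
termination_by _ VL VR => ((VL ∪ VR)ᶜ).card
decreasing_by
  · exact card_compl_insert_union_lt hv
  · exact card_compl_insert_union_lt hw
  · exact card_compl_union_insert_lt hw'

end GameValue

lemma mbScoreH_mono_left {V : Type} [Fintype V] [DecidableEq V] (E : Finset (Finset V))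
    {VL VL' : Finset V} (h : VL ⊆ VL') (VR VR' : Finset V) :
    mbScoreH E VL VR ≤ mbScoreH E VL' VR' := by
  unfold mbScoreH
  exact_mod_cast Finset.card_le_card
    (Finset.monotone_filter_right E fun _ _ he => Finset.Subset.trans he h)

theorem makerBreaker_scoring_game_nonzugzwang_general {V : Type} [Fintype V] [DecidableEq V]
    (E : Finset (Finset V)) (VL VR : Finset V) :
    gameValue (mbScoreH E) false VL VR ≤ gameValue (mbScoreH E) true VL VR :=
  gameValue_false_le_true_of_forall_le_insert fun b _ hv =>
    gameValue_le_gameValue_insert_left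
      (fun VL _ v => mbScoreH_mono_left E (Finset.subset_insert v VL) _ _) b hv

/-- The Maker-Breaker scoring positional game is nonzugzwang:
in every position, the value with Left to move is at least the value with Right to move. -/
theorem makerBreaker_scoring_game_nonzugzwang {V : Type} [Fintype V] [DecidableEq V]
    (E : Finset (Finset V)) (VL VR : Finset V) (hdisj : Disjoint VL VR) :
    gameValue (mbScoreH E) false VL VR ≤ gameValue (mbScoreH E) true VL VR :=
  makerBreaker_scoring_game_nonzugzwang_general E VL VR
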